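/- Two term graphs G₁ and G₂ are bisimilar if and only if there is a term graph G₀ with functional bisimulations from G₁ to G₀ and from G₂ to G₀; in particular, bisimilar term graphs have isomorphic canonical bisimulation collapses. -/

import Mathlib

/-- A (root-connected) term graph over signature `Sig` with arity function `ar`,
    with vertex type `V`. -/
structure TermGraph (Sig : Type) (ar : Sig → ℕ) (V : Type) where
  lab : V → Sig
  args : V → List V
  root : V
  arity_ok : ∀ v, (args v).length = ar (lab v)
  rooted : ∀ v, Relation.ReflTransGen (fun a b => b ∈ args a) root v

/-- `R` is a bisimulation between term graphs `G₁` and `G₂`. -/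
def IsBisim {Sig : Type} {ar : Sig → ℕ} {V₁ V₂ : Type}
    (G₁ : TermGraph Sig ar V₁) (G₂ : TermGraph Sig ar V₂)
    (R : V₁ → V₂ → Prop) : Prop :=
  R G₁.root G₂.root ∧
  (∀ v w, R v w → G₁.lab v = G₂.lab w) ∧
  (∀ v w, R v w → List.Forall₂ R (G₁.args v) (G₂.args w))

/-- `G₁` and `G₂` are bisimilar. -/
def Bisim {Sig : Type} {ar : Sig → ℕ} {V₁ V₂ : Type}
    (G₁ : TermGraph Sig ar V₁) (G₂ : TermGraph Sig ar V₂) : Prop :=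
  ∃ R, IsBisim G₁ G₂ R

/-- `h` is a homomorphism of term graphs: it maps root to root, preserves labels,
    and commutes with the argument function. -/
def IsHom {Sig : Type} {ar : Sig → ℕ} {V₁ V₂ : Type}
    (G₁ : TermGraph Sig ar V₁) (G₂ : TermGraph Sig ar V₂) (h : V₁ → V₂) : Prop :=
  h G₁.root = G₂.root ∧
  (∀ v, G₂.lab (h v) = G₁.lab v) ∧
  (∀ v, G₂.args (h v) = (G₁.args v).map h)

/-- There exists a functional bisimulation (homomorphism) from `G₁` to `G₂`. -/
def FunBisim {Sig : Type} {ar : Sig → ℕ} {V₁ V₂ : Type}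
    (G₁ : TermGraph Sig ar V₁) (G₂ : TermGraph Sig ar V₂) : Prop :=
  ∃ h, IsHom G₁ G₂ h

/-- An isomorphism of term graphs is a bijective homomorphism. -/
def Iso {Sig : Type} {ar : Sig → ℕ} {V₁ V₂ : Type}
    (G₁ : TermGraph Sig ar V₁) (G₂ : TermGraph Sig ar V₂) : Prop :=
  ∃ h, IsHom G₁ G₂ h ∧ Function.Bijective h

/-- The largest self-bisimulation on a term graph. -/
def MaxBisim {Sig : Type} {ar : Sig → ℕ} {V : Type} (G : TermGraph Sig ar V)
    (v w : V) : Prop :=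
  ∃ R, IsBisim G G R ∧ R v w

/-- The canonical bisimulation collapse of a term graph, characterised as the factor
    term graph of the graph by its largest self-bisimulation. -/
def InducedQuotient {Sig : Type} {ar : Sig → ℕ} {V : Type} (G : TermGraph Sig ar V)
    (Q : TermGraph Sig ar (Quot (MaxBisim G))) : Prop :=
  Q.root = Quot.mk (MaxBisim G) G.root ∧
  (∀ v, Q.lab (Quot.mk (MaxBisim G) v) = G.lab v) ∧
  (∀ v, Q.args (Quot.mk (MaxBisim G) v) = (G.args v).map (Quot.mk (MaxBisim G)))

/-!
A bisimulation `R` between `G₁` and `G₂` identifies `v, v'` up to the largest self-bisimulation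
of `G₁` exactly when it does so for any `R`-partners `w, w'` in `G₂`, because
`flip R ∘ MaxBisim G₁ ∘ R` is again a bisimulation. Hence sending the class of `v` to the class
of an `R`-partner of `v` is a well-defined bijective homomorphism between the collapses, and the
collapse of `G₁` is the common target of functional bisimulations from `G₁` and `G₂`.
Conversely, graphs of homomorphisms are bisimulations, and bisimulations compose.
-/

open Relation

namespace List

theorem Forall₂.comp {α β γ : Type*} {R : α → β → Prop} {S : β → γ → Prop} :
    ∀ {l₁ : List α} {l₂ : List β} {l₃ : List γ}, Forall₂ R l₁ l₂ → Forall₂ S l₂ l₃ →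
      Forall₂ (Comp R S) l₁ l₃
  | _, _, _, .nil, .nil => .nil
  | _, _, _, .cons hab h₁, .cons hbc h₂ => .cons ⟨_, hab, hbc⟩ (h₁.comp h₂)

theorem Forall₂.exists_of_mem_right {α β : Type*} {R : α → β → Prop} {l₁ : List α}
    {l₂ : List β} (h : Forall₂ R l₁ l₂) {b : β} (hb : b ∈ l₂) : ∃ a ∈ l₁, R a b := by
  induction h with
  | nil => cases hb
  | cons hab _ ih =>
    rcases mem_cons.1 hb with rfl | hb
    · exact ⟨_, mem_cons_self, hab⟩
    · obtain ⟨a, ha, hRa⟩ := ih hb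
      exact ⟨a, mem_cons_of_mem _ ha, hRa⟩

theorem Forall₂.map_eq_map {α β γ : Type*} {R : α → β → Prop} {f : α → γ} {g : β → γ}
    {l₁ : List α} {l₂ : List β} (h : Forall₂ R l₁ l₂) (hfg : ∀ a b, R a b → f a = g b) :
    l₁.map f = l₂.map g := by
  simpa only [forall₂_eq_eq_eq] using rel_map hfg h

end List

variable {Sig : Type} {ar : Sig → ℕ} {V V₁ V₂ V₃ : Type}
  {G : TermGraph Sig ar V} {G₁ : TermGraph Sig ar V₁} {G₂ : TermGraph Sig ar V₂}
  {G₃ : TermGraph Sig ar V₃}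

theorem isBisim_eq (G : TermGraph Sig ar V) : IsBisim G G Eq :=
  ⟨rfl, fun _ _ h => h ▸ rfl, fun v _ h => h ▸ List.forall₂_refl (G.args v)⟩

namespace IsBisim

variable {R : V₁ → V₂ → Prop}

theorem flip (hR : IsBisim G₁ G₂ R) : IsBisim G₂ G₁ (flip R) :=
  ⟨hR.1, fun _ _ h => (hR.2.1 _ _ h).symm, fun _ _ h => (hR.2.2 _ _ h).flip⟩

theorem comp {S : V₂ → V₃ → Prop} (hR : IsBisim G₁ G₂ R) (hS : IsBisim G₂ G₃ S) :
    IsBisim G₁ G₃ (Comp R S) :=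
  ⟨⟨G₂.root, hR.1, hS.1⟩,
   fun _ _ ⟨_, hab, hbc⟩ => (hR.2.1 _ _ hab).trans (hS.2.1 _ _ hbc),
   fun _ _ ⟨_, hab, hbc⟩ => (hR.2.2 _ _ hab).comp (hS.2.2 _ _ hbc)⟩

theorem exists_rel_left (hR : IsBisim G₁ G₂ R) (w : V₂) : ∃ v, R v w := by
  induction G₂.rooted w with
  | refl => exact ⟨G₁.root, hR.1⟩
  | tail _ hmem ih =>
    obtain ⟨v, hv⟩ := ih
    obtain ⟨a, -, ha⟩ := (hR.2.2 _ _ hv).exists_of_mem_right hmem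
    exact ⟨a, ha⟩

theorem exists_rel_right (hR : IsBisim G₁ G₂ R) (v : V₁) : ∃ w, R v w :=
  hR.flip.exists_rel_left v

end IsBisim

theorem IsHom.isBisim {h : V₁ → V₂} (hh : IsHom G₁ G₂ h) :
    IsBisim G₁ G₂ (fun v w => h v = w) := by
  refine ⟨hh.1, fun v _ hvw => hvw ▸ (hh.2.1 v).symm, fun v _ hvw => ?_⟩
  rw [← hvw, hh.2.2 v, List.forall₂_map_right_iff]
  exact List.forall₂_refl _

theorem IsHom.comp {f : V₁ → V₂} {g : V₂ → V₃} (hf : IsHom G₁ G₂ f) (hg : IsHom G₂ G₃ g) :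
    IsHom G₁ G₃ (g ∘ f) :=
  ⟨by simp only [Function.comp_apply, hf.1, hg.1],
   fun v => (hg.2.1 (f v)).trans (hf.2.1 v),
   fun v => by simp only [Function.comp_apply, hg.2.2, hf.2.2, List.map_map]⟩

namespace MaxBisim

theorem isBisim (G : TermGraph Sig ar V) : IsBisim G G (MaxBisim G) :=
  ⟨⟨Eq, isBisim_eq G, rfl⟩,
   fun _ _ ⟨_, hR, hvw⟩ => hR.2.1 _ _ hvw,
   fun _ _ ⟨R, hR, hvw⟩ => (hR.2.2 _ _ hvw).imp fun _ _ hab => ⟨R, hR, hab⟩⟩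

theorem equivalence (G : TermGraph Sig ar V) : Equivalence (MaxBisim G) where
  refl _ := ⟨Eq, isBisim_eq G, rfl⟩
  symm h := ⟨_, (isBisim G).flip, h⟩
  trans h₁ h₂ := ⟨_, (isBisim G).comp (isBisim G), _, h₁, h₂⟩

theorem mk_eq_mk_iff {v v' : V} : Quot.mk (MaxBisim G) v = Quot.mk _ v' ↔ MaxBisim G v v' :=
  (equivalence G).quot_mk_eq_iff v v'

end MaxBisim

theorem IsBisim.maxBisim {R : V₁ → V₂ → Prop} (hR : IsBisim G₁ G₂ R) {v v' : V₁} {w w' : V₂}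
    (hv : R v w) (hv' : R v' w') (h : MaxBisim G₁ v v') : MaxBisim G₂ w w' :=
  ⟨_, (hR.flip.comp (MaxBisim.isBisim G₁)).comp hR, v', ⟨v, hv, h⟩, hv'⟩

theorem InducedQuotient.isHom_mk {Q : TermGraph Sig ar (Quot (MaxBisim G))}
    (hQ : InducedQuotient G Q) : IsHom G Q (Quot.mk _) :=
  ⟨hQ.1.symm, hQ.2.1, hQ.2.2⟩

namespace TermGraph

noncomputable def collapse (G : TermGraph Sig ar V) : TermGraph Sig ar (Quot (MaxBisim G)) where
  lab := Quot.lift G.lab (MaxBisim.isBisim G).2.1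
  args := Quot.lift (fun v => (G.args v).map (Quot.mk _)) fun _ _ hvw =>
    ((MaxBisim.isBisim G).2.2 _ _ hvw).map_eq_map fun _ _ => Quot.sound
  root := Quot.mk _ G.root
  arity_ok := Quot.ind fun v => by simpa using G.arity_ok v
  rooted := Quot.ind fun v => by
    induction G.rooted v with
    | refl => exact .refl
    | tail _ hmem ih => exact ih.tail (List.mem_map_of_mem hmem)

theorem inducedQuotient_collapse (G : TermGraph Sig ar V) : InducedQuotient G G.collapse :=
  ⟨rfl, fun _ => rfl, fun _ => rfl⟩

end TermGraph

namespace IsBisim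

variable {R : V₁ → V₂ → Prop}

noncomputable def collapseMap (hR : IsBisim G₁ G₂ R) : Quot (MaxBisim G₁) → Quot (MaxBisim G₂) :=
  Quot.map (fun v => (hR.exists_rel_right v).choose) fun v v' =>
    hR.maxBisim (hR.exists_rel_right v).choose_spec (hR.exists_rel_right v').choose_spec

theorem collapseMap_mk (hR : IsBisim G₁ G₂ R) {v : V₁} {w : V₂} (h : R v w) :
    hR.collapseMap (Quot.mk _ v) = Quot.mk _ w :=
  Quot.sound <|
    hR.maxBisim (hR.exists_rel_right v).choose_spec h ((MaxBisim.equivalence G₁).refl v)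

theorem isHom_collapseMap (hR : IsBisim G₁ G₂ R) {Q₁ : TermGraph Sig ar (Quot (MaxBisim G₁))}
    {Q₂ : TermGraph Sig ar (Quot (MaxBisim G₂))} (hQ₁ : InducedQuotient G₁ Q₁)
    (hQ₂ : InducedQuotient G₂ Q₂) : IsHom Q₁ Q₂ hR.collapseMap := by
  refine ⟨by rw [hQ₁.1, hQ₂.1, hR.collapseMap_mk hR.1], Quot.ind fun v => ?_,
    Quot.ind fun v => ?_⟩
  all_goals
    obtain ⟨w, hvw⟩ := hR.exists_rel_right v
    rw [hR.collapseMap_mk hvw]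
  · rw [hQ₁.2.1, hQ₂.2.1, hR.2.1 _ _ hvw]
  · rw [hQ₁.2.2, hQ₂.2.2, List.map_map]
    exact ((hR.2.2 _ _ hvw).map_eq_map fun _ _ h => hR.collapseMap_mk h).symm

theorem collapseMap_injective (hR : IsBisim G₁ G₂ R) : Function.Injective hR.collapseMap := by
  refine Quot.ind fun v => Quot.ind fun v' h => ?_
  obtain ⟨w, hvw⟩ := hR.exists_rel_right v
  obtain ⟨w', hvw'⟩ := hR.exists_rel_right v'
  rw [hR.collapseMap_mk hvw, hR.collapseMap_mk hvw', MaxBisim.mk_eq_mk_iff] at h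
  exact MaxBisim.mk_eq_mk_iff.2 (hR.flip.maxBisim hvw hvw' h)

theorem collapseMap_surjective (hR : IsBisim G₁ G₂ R) :
    Function.Surjective hR.collapseMap :=
  Quot.ind fun w =>
    let ⟨v, hvw⟩ := hR.exists_rel_left w
    ⟨Quot.mk _ v, hR.collapseMap_mk hvw⟩

end IsBisim

/-- Two term graphs are bisimilar if and only if they have functional bisimulations
    to a common term graph; in particular, bisimilar term graphs have isomorphic
    canonical bisimulation collapses. -/
theorem bisim_iff_common_funbisim {Sig : Type} {ar : Sig → ℕ} {V₁ V₂ : Type}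
    (G₁ : TermGraph Sig ar V₁) (G₂ : TermGraph Sig ar V₂) :
    (Bisim G₁ G₂ ↔
      ∃ (V₀ : Type) (G₀ : TermGraph Sig ar V₀), FunBisim G₁ G₀ ∧ FunBisim G₂ G₀) ∧
    (Bisim G₁ G₂ →
      ∀ (Q₁ : TermGraph Sig ar (Quot (MaxBisim G₁)))
        (Q₂ : TermGraph Sig ar (Quot (MaxBisim G₂))),
        InducedQuotient G₁ Q₁ → InducedQuotient G₂ Q₂ → Iso Q₁ Q₂) := by
  refine ⟨⟨fun ⟨R, hR⟩ => ?_, fun ⟨_, _, ⟨_, hh₁⟩, ⟨_, hh₂⟩⟩ => ?_⟩,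
    fun ⟨R, hR⟩ Q₁ Q₂ hQ₁ hQ₂ => ?_⟩
  · have hG₁ := G₁.inducedQuotient_collapse
    have hG₂ := G₂.inducedQuotient_collapse
    exact ⟨_, G₁.collapse, ⟨_, hG₁.isHom_mk⟩,
      ⟨_, hG₂.isHom_mk.comp (hR.flip.isHom_collapseMap hG₂ hG₁)⟩⟩
  · exact ⟨_, hh₁.isBisim.comp hh₂.isBisim.flip⟩
  · exact ⟨hR.collapseMap, hR.isHom_collapseMap hQ₁ hQ₂,
      hR.collapseMap_injective, hR.collapseMap_surjective⟩
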